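/- With Δ and ⟨·,·⟩ as the signature-(e, n−e) Laplacian and Hermitian form on ℂ^n, for any n×n complex matrix A one has Δ²{⟨z,z⟩·⟨Az,z⟩} = 2(n+1)·Tr(A). -/

import Mathlib

open MvPolynomial

/-- Signature coefficients of the Hermitian form of signature `(e, n-e)`. -/
noncomputable def eps (n e : ℕ) (k : Fin n) : ℂ := if (k : ℕ) < e then 1 else -1

/-- The polynomial `⟨z,z⟩ = Σ ε_k z^k z̄^k`. -/
noncomputable def hermPoly (n e : ℕ) : MvPolynomial (Fin n ⊕ Fin n) ℂ :=
  ∑ k : Fin n, C (eps n e k) * X (Sum.inl k) * X (Sum.inr k)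

/-- The polynomial `⟨Az,z⟩ = Σ ε_k (Az)^k z̄^k`. -/
noncomputable def hermPolyA (n e : ℕ) (A : Matrix (Fin n) (Fin n) ℂ) :
    MvPolynomial (Fin n ⊕ Fin n) ℂ :=
  ∑ k : Fin n, C (eps n e k) * (∑ j : Fin n, C (A k j) * X (Sum.inl j)) * X (Sum.inr k)

/-- The signature-`(e, n-e)` Laplacian `Δ = Σ ε_k ∂²/∂z^k ∂z̄^k`. -/
noncomputable def Lap (n e : ℕ) (P : MvPolynomial (Fin n ⊕ Fin n) ℂ) :
    MvPolynomial (Fin n ⊕ Fin n) ℂ :=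
  ∑ k : Fin n, C (eps n e k) * pderiv (Sum.inl k) (pderiv (Sum.inr k) P)

/-!
Write `P = ⟨z,z⟩` and `Q = ⟨Az,z⟩`. Since `∂P/∂z^k = ε_k z̄^k` and `∂P/∂z̄^k = ε_k z^k`, with `ε_k² = 1`,
the cross terms of the Leibniz rule for `Δ(PQ)` add up to the Euler operator applied to `Q`. As
`Q` is homogeneous of degree 2, `ΔP = n` and `ΔQ = Tr A`, this gives `Δ(PQ) = (n + 2) Q + (Tr A) P`,
and applying `Δ` once more yields `(n + 2) Tr A + n Tr A = 2(n + 1) Tr A`.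
-/

section

variable {n e : ℕ}

lemma eps_mul_self (k : Fin n) : eps n e k * eps n e k = 1 := by
  unfold eps; split <;> ring

lemma C_eps_mul_C_eps (k : Fin n) :
    (C (eps n e k) * C (eps n e k) : MvPolynomial (Fin n ⊕ Fin n) ℂ) = 1 := by
  rw [← C_mul, eps_mul_self, C_1]

lemma Lap_add (P Q : MvPolynomial (Fin n ⊕ Fin n) ℂ) :
    Lap n e (P + Q) = Lap n e P + Lap n e Q := by
  simp only [Lap, map_add, mul_add, Finset.sum_add_distrib]

lemma Lap_C_mul (c : ℂ) (P : MvPolynomial (Fin n ⊕ Fin n) ℂ) :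
    Lap n e (C c * P) = C c * Lap n e P := by
  simp only [Lap, pderiv_C_mul, Finset.mul_sum]
  exact Finset.sum_congr rfl fun k _ => by ring

lemma Lap_mul (P Q : MvPolynomial (Fin n ⊕ Fin n) ℂ) :
    Lap n e (P * Q) = Lap n e P * Q + P * Lap n e Q +
      ∑ k : Fin n, C (eps n e k) * (pderiv (Sum.inl k) P * pderiv (Sum.inr k) Q +
        pderiv (Sum.inr k) P * pderiv (Sum.inl k) Q) := by
  simp only [Lap, pderiv_mul, map_add, Finset.sum_mul, Finset.mul_sum, ← Finset.sum_add_distrib]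
  exact Finset.sum_congr rfl fun k _ => by ring

lemma pderiv_inl_hermPoly (k : Fin n) :
    pderiv (Sum.inl k) (hermPoly n e) = C (eps n e k) * X (Sum.inr k) := by
  rw [hermPoly, map_sum, Finset.sum_eq_single k]
  · simp; ring
  · intro m _ hmk
    simp [hmk]
  · simp

lemma pderiv_inr_hermPoly (k : Fin n) :
    pderiv (Sum.inr k) (hermPoly n e) = C (eps n e k) * X (Sum.inl k) := by
  rw [hermPoly, map_sum, Finset.sum_eq_single k]
  · simp
  · intro m _ hmk
    simp [hmk]
  · simp

lemma pderiv_inr_hermPolyA (A : Matrix (Fin n) (Fin n) ℂ) (k : Fin n) :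
    pderiv (Sum.inr k) (hermPolyA n e A) =
      C (eps n e k) * ∑ j : Fin n, C (A k j) * X (Sum.inl j) := by
  rw [hermPolyA, map_sum, Finset.sum_eq_single k]
  · simp [map_sum]
  · intro m _ hmk
    simp [map_sum, hmk]
  · simp

lemma pderiv_inl_sum_C_mul_X_inl (c : Fin n → ℂ) (k : Fin n) :
    pderiv (Sum.inl k) (∑ j : Fin n, C (c j) * X (Sum.inl j) : MvPolynomial (Fin n ⊕ Fin n) ℂ) =
      C (c k) := by
  simp [map_sum, Pi.single_apply]

lemma Lap_hermPoly : Lap n e (hermPoly n e) = C (n : ℂ) := by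
  simp [Lap, pderiv_inr_hermPoly, C_eps_mul_C_eps]

lemma Lap_hermPolyA (A : Matrix (Fin n) (Fin n) ℂ) :
    Lap n e (hermPolyA n e A) = C (Matrix.trace A) := by
  simp only [Lap, pderiv_inr_hermPolyA, pderiv_C_mul, pderiv_inl_sum_C_mul_X_inl, ← mul_assoc,
    C_eps_mul_C_eps, one_mul, ← map_sum]
  rfl

lemma isHomogeneous_hermPolyA (A : Matrix (Fin n) (Fin n) ℂ) :
    (hermPolyA n e A).IsHomogeneous 2 := by
  refine IsHomogeneous.sum _ _ _ fun k _ => ?_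
  refine IsHomogeneous.mul (m := 1) (n := 1) ?_ (isHomogeneous_X _ _)
  simpa using ((IsHomogeneous.sum _ _ 1 fun j _ => isHomogeneous_C_mul_X (A k j) _).C_mul
    (eps n e k))

lemma Lap_hermPoly_mul {d : ℕ} {Q : MvPolynomial (Fin n ⊕ Fin n) ℂ} (hQ : Q.IsHomogeneous d) :
    Lap n e (hermPoly n e * Q) = C ((n : ℂ) + d) * Q + hermPoly n e * Lap n e Q := by
  have euler : ∑ k : Fin n, C (eps n e k) * (pderiv (Sum.inl k) (hermPoly n e) *
      pderiv (Sum.inr k) Q + pderiv (Sum.inr k) (hermPoly n e) * pderiv (Sum.inl k) Q) =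
      d • Q := by
    rw [← hQ.sum_X_mul_pderiv, Fintype.sum_sum_type, ← Finset.sum_add_distrib]
    refine Finset.sum_congr rfl fun k _ => ?_
    rw [pderiv_inl_hermPoly, pderiv_inr_hermPoly]
    linear_combination (X (Sum.inr k) * pderiv (Sum.inr k) Q +
      X (Sum.inl k) * pderiv (Sum.inl k) Q) * C_eps_mul_C_eps (e := e) k
  rw [Lap_mul, euler, Lap_hermPoly, nsmul_eq_mul, map_add, map_natCast, map_natCast]
  ring

end

theorem stmt1_general (n e : ℕ) (A : Matrix (Fin n) (Fin n) ℂ) :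
    Lap n e (Lap n e (hermPoly n e * hermPolyA n e A)) =
      C (2 * ((n : ℂ) + 1) * Matrix.trace A) := by
  rw [Lap_hermPoly_mul (isHomogeneous_hermPolyA A), Lap_hermPolyA, mul_comm (hermPoly n e),
    Lap_add, Lap_C_mul, Lap_C_mul, Lap_hermPolyA, Lap_hermPoly, ← C_mul, ← C_mul, ← C_add]
  congr 1
  push_cast
  ring

/-- `Δ²{⟨z,z⟩⟨Az,z⟩} = 2(n+1) Tr(A)`. -/
theorem stmt1 (n e : ℕ) (he : e ≤ n) (A : Matrix (Fin n) (Fin n) ℂ) :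
    Lap n e (Lap n e (hermPoly n e * hermPolyA n e A)) =
      C (2 * ((n : ℂ) + 1) * Matrix.trace A) :=
  stmt1_general n e A
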